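/- Let d ≥ 1 and let (u_i)_{i=1}^{d²} be a SIC system on ℂ^d. Then for any complex coefficients a_1, …, a_{d²}, the squared norm ‖Σ_i a_i (u_i ⊗ ū_i)‖² equals (1/(d+1))·|Σ_i a_i|² + (d/(d+1))·Σ_i |a_i|². -/

import Mathlib

open scoped BigOperators ComplexInnerProductSpace
open Matrix MeasureTheory

noncomputable section

/-- `ℂ^d` with the standard Hermitian inner product. -/
abbrev V (d : ℕ) : Type := EuclideanSpace ℂ (Fin d)

/-- `ℂ^d ⊗ ℂ^d`, identified with functions on `Fin d × Fin d`. -/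
abbrev V2 (d : ℕ) : Type := EuclideanSpace ℂ (Fin d × Fin d)

/-- operators on `ℂ^d ⊗ ℂ^d`, as matrices. -/
abbrev Op2 (d : ℕ) : Type := Matrix (Fin d × Fin d) (Fin d × Fin d) ℂ

/-- tensor (Kronecker) product of vectors. -/
def tens {d : ℕ} (u v : V d) : V2 d := WithLp.toLp 2 (fun p => u p.1 * v p.2)

/-- entrywise complex conjugate `ū` of a vector. -/
def cvec {d : ℕ} (u : V d) : V d := WithLp.toLp 2 (fun k => starRingEnd ℂ (u k))

/-- the maximally entangled state `φ⁰ = (1/√d) Σ_k e_k ⊗ e_k`. -/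
def phi0 (d : ℕ) : V2 d := WithLp.toLp 2 (fun p => if p.1 = p.2 then ((Real.sqrt d : ℂ))⁻¹ else 0)

/-- the rank-one operator `|w⟩⟨w|`. -/
def outer {d : ℕ} (w : V2 d) : Op2 d := Matrix.of fun p q => w p * starRingEnd ℂ (w q)

/-- `T_inv = |φ⁰⟩⟨φ⁰| + (1/(d+1))(I - |φ⁰⟩⟨φ⁰|)`. -/
def Tinv (d : ℕ) : Op2 d := outer (phi0 d) + (1 / ((d : ℂ) + 1)) • (1 - outer (phi0 d))


/-- A SIC system on `ℂ^d`: `d²` unit vectors with `|⟨u_i, u_j⟩|² = 1/(d+1)` for `i ≠ j`. -/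
def IsSIC {d : ℕ} (u : Fin (d ^ 2) → V d) : Prop :=
  (∀ i, ‖u i‖ = 1) ∧ ∀ i j, i ≠ j → ‖⟪u i, u j⟫‖ ^ 2 = 1 / (d + 1)

/-! The vectors `u_i ⊗ ū_i` have Gram matrix `⟪u_i ⊗ ū_i, u_j ⊗ ū_j⟫ = |⟪u_i, u_j⟫|²`, which for a SIC
system is `1/(d+1) + δᵢⱼ d/(d+1)`. Expanding `‖Σ aᵢ wᵢ‖²` against a Gram matrix of the form
`α + β δᵢⱼ` gives `α |Σ aᵢ|² + β Σ |aᵢ|²`. -/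

theorem norm_sq_sum_smul_of_inner_eq {𝕜 E ι : Type*} [RCLike 𝕜] [NormedAddCommGroup E]
    [InnerProductSpace 𝕜 E] [Fintype ι] [DecidableEq ι] {w : ι → E} {α β : ℝ}
    (hw : ∀ i j, inner 𝕜 (w i) (w j) = (α : 𝕜) + if i = j then (β : 𝕜) else 0) (a : ι → 𝕜) :
    ‖∑ i, a i • w i‖ ^ 2 = α * ‖∑ i, a i‖ ^ 2 + β * ∑ i, ‖a i‖ ^ 2 := by
  have hinner : inner 𝕜 (∑ i, a i • w i) (∑ i, a i • w i)
      = (α : 𝕜) * (starRingEnd 𝕜 (∑ i, a i) * ∑ i, a i)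
        + (β : 𝕜) * ∑ i, starRingEnd 𝕜 (a i) * a i := by
    rw [map_sum, Finset.sum_mul_sum, sum_inner]
    simp only [inner_sum, inner_smul_left, inner_smul_right, hw, mul_add, mul_ite, mul_zero,
      Finset.sum_add_distrib, Finset.sum_ite_eq, Finset.mem_univ, if_true, Finset.mul_sum]
    congr 1 <;> refine Finset.sum_congr rfl fun i _ => ?_
    · exact Finset.sum_congr rfl fun j _ => by ring
    · ring
  rw [@norm_sq_eq_re_inner 𝕜, hinner]
  simp only [RCLike.conj_mul, map_add, RCLike.re_ofReal_mul, ← RCLike.ofReal_pow, RCLike.ofReal_re,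
    ← RCLike.ofReal_sum]

lemma inner_tens {d : ℕ} (u v u' v' : V d) : ⟪tens u v, tens u' v'⟫ = ⟪u, u'⟫ * ⟪v, v'⟫ := by
  simp only [PiLp.inner_apply, RCLike.inner_apply, tens, map_mul,
    Fintype.sum_prod_type, Finset.sum_mul_sum]
  exact Finset.sum_congr rfl fun k _ => Finset.sum_congr rfl fun l _ => by ring

lemma inner_cvec {d : ℕ} (u v : V d) : ⟪cvec u, cvec v⟫ = ⟪v, u⟫ := by
  simp only [PiLp.inner_apply, RCLike.inner_apply, cvec, RCLike.conj_conj]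
  exact Finset.sum_congr rfl fun k _ => mul_comm _ _

lemma inner_tens_cvec {d : ℕ} (u v : V d) :
    ⟪tens u (cvec u), tens v (cvec v)⟫ = ((‖⟪u, v⟫‖ ^ 2 : ℝ) : ℂ) := by
  rw [inner_tens, inner_cvec, ← inner_conj_symm v u, RCLike.mul_conj, Complex.ofReal_pow]
  rfl

lemma IsSIC.norm_inner_sq {d : ℕ} {u : Fin (d ^ 2) → V d} (hu : IsSIC u) (i j : Fin (d ^ 2)) :
    ‖⟪u i, u j⟫‖ ^ 2 = 1 / (d + 1) + if i = j then (d : ℝ) / (d + 1) else 0 := by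
  by_cases hij : i = j
  · subst hij
    rw [if_pos rfl, inner_self_eq_norm_sq_to_K, hu.1 i]
    norm_num
    field_simp
    ring
  · rw [if_neg hij, hu.2 i j hij, add_zero]

theorem stmt2_general (d : ℕ) (u : Fin (d ^ 2) → V d) (hu : IsSIC u)
    (a : Fin (d ^ 2) → ℂ) :
    ‖∑ i, a i • tens (u i) (cvec (u i))‖ ^ 2 =
      (1 / (d + 1)) * ‖∑ i, a i‖ ^ 2
        + ((d : ℝ) / (d + 1)) * ∑ i, ‖a i‖ ^ 2 :=
  norm_sq_sum_smul_of_inner_eq (fun i j => by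
    rw [inner_tens_cvec, hu.norm_inner_sq]
    split_ifs <;> simp) a

/-- `‖Σ_i a_i (u_i ⊗ ū_i)‖² = (1/(d+1))|Σ_i a_i|² + (d/(d+1)) Σ_i |a_i|²`. -/
theorem stmt2 (d : ℕ) (hd : 1 ≤ d) (u : Fin (d ^ 2) → V d) (hu : IsSIC u)
    (a : Fin (d ^ 2) → ℂ) :
    ‖∑ i, a i • tens (u i) (cvec (u i))‖ ^ 2 =
      (1 / (d + 1)) * ‖∑ i, a i‖ ^ 2
        + ((d : ℝ) / (d + 1)) * ∑ i, ‖a i‖ ^ 2 :=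
  stmt2_general d u hu a
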